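/- arXiv:2510.26972 — 5 statements merged into one kernel-verified Lean document; each statement's English description precedes it below -/
import Mathlib

section
/- Let q be a prime power, k a positive integer, n = 2k, and let α ∈ F_{q^n} be a normal element over F_q. Let g ∈ F_q[x] be a monic divisor of x^n − 1 with deg g = k, let f = (x^n − 1)/g, and set β = L_f(α) ∈ F_{q^n}. If x − 1 divides g, then there exists u_0 ∈ F_q such that Ord(β + u) = g for all u ∈ F_q \ {u_0}. -/
/-!
With `σ : x ↦ x^q`, `L_h(γ) = h(σ) γ`, and on constants `L_h(u) = h(1) u`. Normality of `α`
means `L_h(α) ≠ 0` whenever `0 ≠ h` has degree `< n`; hence `L_d(β) = L_{df}(α) ≠ 0` for every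
nonzero `d` of degree `< deg g`, as then `deg (d f) < n`. Write `g = (x - 1) h₀`. Since
`g(1) = 0`, `L_g(β + u) = 0`. If a proper divisor `d` of `g` killed `β + u`, then either
`(x - 1) ∣ g / d`, so `d ∣ h₀` and `L_{h₀}(β + u) = L_{h₀}(β) + h₀(1) u = 0`, which happens for
at most one `u` because `L_{h₀}(β) ≠ 0`; or `d(1) = 0`, and then `L_d(β + u) = L_d(β) ≠ 0`.
-/

open Polynomial

/-- `Lf q f α = Σ aᵢ α^{qⁱ}`, the action of the linearized `q`-associate of `f` on `α`. -/
noncomputable def Lf (q : ℕ) {F E : Type*} [Field F] [Field E] [Algebra F E]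
    (f : F[X]) (α : E) : E :=
  f.sum fun i a => algebraMap F E a * α ^ q ^ i

/-- `α` is a primitive element: it generates the multiplicative group. -/
def IsPrimitiveElem {E : Type*} [Field E] (α : E) : Prop :=
  ∀ β : E, β ≠ 0 → ∃ j : ℕ, β = α ^ j

/-- `α` is `k`-normal over `F`: the `F`-span of `α, α^q, …, α^{q^{n-1}}` has dimension `n - k`. -/
def IskNormal (q n k : ℕ) {F E : Type*} [Field F] [Field E] [Algebra F E] (α : E) : Prop :=
  Module.finrank F ↥(Submodule.span F (Set.range fun i : Fin n => α ^ q ^ (i : ℕ))) = n - k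

/-- `g` is the `F_q`-order of `α`: the monic polynomial of least degree with `L_g(α) = 0`. -/
def IsOrd (q : ℕ) {F E : Type*} [Field F] [Field E] [Algebra F E] (α : E) (g : F[X]) : Prop :=
  g.Monic ∧ Lf q g α = 0 ∧ ∀ h : F[X], h.Monic → Lf q h α = 0 → g.degree ≤ h.degree

/-- `α` is `m`-free: for every divisor `d > 1` of `m`, `α` is not a `d`-th power. -/
def IsMFree {E : Type*} [Field E] (m : ℕ) (α : E) : Prop :=
  ∀ d : ℕ, d ∣ m → 1 < d → ¬ ∃ β : E, β ^ d = α

/-- Property (A) (with `n = 2k`): `g` is a monic divisor of `x^{2k} - 1` of degree `k`,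
`g ≠ x^k - 1`, and `(x - 1) ∣ g`. -/
def SatisfiesA {F : Type*} [Field F] (k : ℕ) (g : F[X]) : Prop :=
  g.Monic ∧ g ∣ (X ^ (2 * k) - 1) ∧ g.natDegree = k ∧ g ≠ X ^ k - 1 ∧ (X - 1 : F[X]) ∣ g

/-- `W(t) = 2^{ω(t)}`, the number of squarefree divisors of the positive integer `t`. -/
def Wnat (t : ℕ) : ℕ := 2 ^ t.primeFactors.card

/-- `W(f)`, the number of squarefree monic divisors of the polynomial `f`. -/
noncomputable def Wpoly {F : Type*} [Field F] (f : F[X]) : ℕ :=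
  Nat.card {d : F[X] // d.Monic ∧ Squarefree d ∧ d ∣ f}

theorem degree_le_of_aeval_eq_zero_of_forall_dvd {F M : Type*} [Field F] [AddCommGroup M]
    [Module F M] {σ : Module.End F M} {v : M} {g h : F[X]} (hg : aeval σ g v = 0)
    (hmin : ∀ d, d ∣ g → d.degree < g.degree → aeval σ d v ≠ 0)
    (h0 : h ≠ 0) (hh : aeval σ h v = 0) : g.degree ≤ h.degree := by
  classical
  have hgcd : aeval σ (EuclideanDomain.gcd g h) v = 0 := by
    rw [EuclideanDomain.gcd_eq_gcd_ab, mul_comm g, mul_comm h, map_add, map_mul, map_mul,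
      LinearMap.add_apply, Module.End.mul_apply, Module.End.mul_apply, hg, hh, map_zero,
      map_zero, add_zero]
  exact (not_lt.mp fun hlt => hmin _ (EuclideanDomain.gcd_dvd_left g h) hlt hgcd).trans
    (degree_le_of_dvd (EuclideanDomain.gcd_dvd_right g h) h0)

theorem IskNormal.Lf_ne_zero {F E : Type*} [Field F] [Field E] [Algebra F E] {q n : ℕ} {α : E}
    (hα : IskNormal q n 0 (F := F) α) {h : F[X]} (h0 : h ≠ 0) (hdeg : h.natDegree < n) :
    Lf q h α ≠ 0 := by
  have hli : LinearIndependent F fun i : Fin n => α ^ q ^ (i : ℕ) := by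
    rw [linearIndependent_iff_card_eq_finrank_span]
    simpa [Set.finrank] using hα.symm
  intro hzero
  refine h0 (Polynomial.ext fun j => ?_)
  have hsum : ∑ i : Fin n, h.coeff i • α ^ q ^ (i : ℕ) = 0 := by
    rw [Lf, sum_over_range' h (by simp) n hdeg] at hzero
    rw [Fin.sum_univ_eq_sum_range (fun i => h.coeff i • α ^ q ^ i)]
    simpa [Algebra.smul_def] using hzero
  rcases lt_or_ge j n with hj | hj
  · simpa using Fintype.linearIndependent_iff.mp hli _ hsum ⟨j, hj⟩
  · simp [coeff_eq_zero_of_natDegree_lt (hdeg.trans_le hj)]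

section Linearized

variable {F E : Type*} [Field F] [Fintype F] [Field E] [Algebra F E]

local notation "q" => Fintype.card F

theorem Lf_eq_aeval_frobeniusAlgHom (h : F[X]) (γ : E) :
    Lf q h γ = aeval (FiniteField.frobeniusAlgHom F E).toLinearMap h γ := by
  simp [Lf, aeval_eq_sum_range, Polynomial.sum_over_range, LinearMap.sum_apply,
    Module.End.pow_apply, FiniteField.coe_frobeniusAlgHom, pow_iterate, Algebra.smul_def]

theorem Lf_mul (a b : F[X]) (γ : E) : Lf q (a * b) γ = Lf q a (Lf q b γ) := by
  simp only [Lf_eq_aeval_frobeniusAlgHom, map_mul, Module.End.mul_apply]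

theorem Lf_add (h : F[X]) (x y : E) : Lf q h (x + y) = Lf q h x + Lf q h y := by
  simp only [Lf_eq_aeval_frobeniusAlgHom, map_add]

theorem Lf_algebraMap (h : F[X]) (u : F) :
    Lf q h (algebraMap F E u) = algebraMap F E (h.eval 1 * u) := by
  simp [Lf, eval_eq_sum, Polynomial.sum_def, Finset.sum_mul, ← map_pow,
    FiniteField.pow_card_pow]

theorem Lf_X_pow_sub_one_eq_zero [Fintype E] {n : ℕ} (hE : Fintype.card E = q ^ n) (γ : E) :
    Lf q (X ^ n - 1 : F[X]) γ = 0 := by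
  simp [Lf_eq_aeval_frobeniusAlgHom, Module.End.pow_apply, FiniteField.coe_frobeniusAlgHom,
    pow_iterate, ← hE, FiniteField.pow_card]

theorem isOrd_of_forall_dvd {γ : E} {g : F[X]} (hg : g.Monic) (hγ : Lf q g γ = 0)
    (hmin : ∀ d, d ∣ g → d.degree < g.degree → Lf q d γ ≠ 0) : IsOrd q γ g := by
  simp only [IsOrd, Lf_eq_aeval_frobeniusAlgHom] at hγ hmin ⊢
  exact ⟨hg, hγ, fun h hh hhγ => degree_le_of_aeval_eq_zero_of_forall_dvd hγ hmin hh.ne_zero hhγ⟩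

theorem subsingleton_setOf_Lf_add_algebraMap_eq_zero {h : F[X]} {γ : E}
    (hγ : Lf q h γ ≠ 0) : {u : F | Lf q h (γ + algebraMap F E u) = 0}.Subsingleton := by
  intro u₁ hu₁ u₂ hu₂
  simp only [Set.mem_ofPred_eq, Lf_add, Lf_algebraMap] at hu₁ hu₂
  have hdiff : h.eval 1 * (u₁ - u₂) = 0 :=
    (algebraMap F E).injective (by rw [mul_sub, map_sub, map_zero]; linear_combination hu₁ - hu₂)
  rcases mul_eq_zero.mp hdiff with h1 | h12
  · exact absurd (by simpa [h1] using hu₁) hγ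
  · exact sub_eq_zero.mp h12

variable {n : ℕ} {α : E} {g f : F[X]}

theorem Lf_Lf_ne_zero_of_degree_lt (hα : IskNormal q n 0 (F := F) α)
    (hgf : g * f = X ^ n - 1) (hn : n ≠ 0) {d : F[X]} (hd0 : d ≠ 0)
    (hdeg : d.degree < g.degree) : Lf q d (Lf q f α) ≠ 0 := by
  have hgf0 : g * f ≠ 0 := by
    rw [hgf, ← C_1]; exact X_pow_sub_C_ne_zero (Nat.pos_of_ne_zero hn) 1
  have hf0 : f ≠ 0 := right_ne_zero_of_mul hgf0
  have hgfdeg : (g * f).natDegree = n := by rw [hgf, ← C_1, natDegree_X_pow_sub_C]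
  rw [← Lf_mul]
  refine hα.Lf_ne_zero (mul_ne_zero hd0 hf0) ?_
  rw [natDegree_mul hd0 hf0]
  rw [natDegree_mul (left_ne_zero_of_mul hgf0) hf0] at hgfdeg
  have := natDegree_lt_natDegree hd0 hdeg
  omega

theorem Lf_add_algebraMap_ne_zero_of_dvd (hα : IskNormal q n 0 (F := F) α) {h₀ : F[X]}
    (hgf : (X - 1) * h₀ * f = X ^ n - 1) (hn : n ≠ 0) {u : F}
    (hu : Lf q h₀ (Lf q f α + algebraMap F E u) ≠ 0) {d : F[X]} (hd : d ∣ (X - 1) * h₀)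
    (hdeg : d.degree < ((X - 1) * h₀).degree) :
    Lf q d (Lf q f α + algebraMap F E u) ≠ 0 := by
  obtain ⟨e, he⟩ := hd
  have hd0 : d ≠ 0 := by rintro rfl; rw [zero_mul] at he; simp [he] at hdeg
  by_cases he1 : e.IsRoot 1
  · obtain ⟨e', rfl⟩ := dvd_iff_isRoot.mpr he1
    have hh₀ : h₀ = d * e' := by
      refine mul_left_cancel₀ (X_sub_C_ne_zero (1 : F)) ?_
      rw [C_1, he, C_1]; ring
    intro hzero
    exact hu (by rw [hh₀, mul_comm, Lf_mul, hzero, Lf_eq_aeval_frobeniusAlgHom, map_zero])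
  · have hd1 : d.eval 1 = 0 := by
      have : d.eval 1 * e.eval 1 = 0 := by rw [← eval_mul, ← he]; simp
      exact (mul_eq_zero.mp this).resolve_right he1
    rw [Lf_add, Lf_algebraMap, hd1, zero_mul, map_zero, add_zero]
    exact Lf_Lf_ne_zero_of_degree_lt hα hgf hn hd0 hdeg

theorem exists_forall_ne_isOrd_Lf_add_algebraMap [Fintype E]
    (hE : Fintype.card E = q ^ n) (hα : IskNormal q n 0 (F := F) α) (hg : g.Monic)
    (hgf : g * f = X ^ n - 1) (hx1 : (X - 1 : F[X]) ∣ g) (hn : n ≠ 0) :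
    ∃ u₀ : F, ∀ u : F, u ≠ u₀ → IsOrd q (Lf q f α + algebraMap F E u) g := by
  obtain ⟨h₀, rfl⟩ := hx1
  have hh₀0 : h₀ ≠ 0 := right_ne_zero_of_mul hg.ne_zero
  have hh₀deg : h₀.degree < ((X - 1) * h₀).degree := by
    rw [← C_1, degree_mul, degree_X_sub_C, degree_eq_natDegree hh₀0, add_comm]
    exact_mod_cast Nat.lt_succ_self _
  have hh₀ : Lf q h₀ (Lf q f α) ≠ 0 := Lf_Lf_ne_zero_of_degree_lt hα hgf hn hh₀0 hh₀deg
  obtain ⟨u₀, hu₀⟩ : ∃ u₀ : F, ∀ u, u ≠ u₀ → Lf q h₀ (Lf q f α + algebraMap F E u) ≠ 0 := by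
    by_cases hex : ∃ u₀ : F, Lf q h₀ (Lf q f α + algebraMap F E u₀) = 0
    · obtain ⟨u₀, hu₀⟩ := hex
      exact ⟨u₀, fun u hu hzero =>
        hu (subsingleton_setOf_Lf_add_algebraMap_eq_zero hh₀ hzero hu₀)⟩
    · exact ⟨0, fun u _ hzero => hex ⟨u, hzero⟩⟩
  refine ⟨u₀, fun u hu => isOrd_of_forall_dvd hg ?_ fun d hd hdeg =>
    Lf_add_algebraMap_ne_zero_of_dvd hα hgf hn (hu₀ u hu) hd hdeg⟩
  rw [Lf_add, Lf_algebraMap, ← Lf_mul, hgf, Lf_X_pow_sub_one_eq_zero hE]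
  simp

end Linearized

theorem stmt4_general (q k : ℕ) (hk : 0 < k)
    (F E : Type*) [Field F] [Fintype F] [Field E] [Fintype E] [Algebra F E]
    (hF : Fintype.card F = q) (hE : Fintype.card E = q ^ (2 * k))
    (α : E) (hα : IskNormal q (2 * k) 0 (F := F) α)
    (g f : F[X]) (hg : g.Monic)
    (hgf : g * f = X ^ (2 * k) - 1) (hx1 : (X - 1 : F[X]) ∣ g)
    (β : E) (hβ : β = Lf q f α) :
    ∃ u₀ : F, ∀ u : F, u ≠ u₀ → IsOrd q (β + algebraMap F E u) g := by
  subst hF hβ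
  exact exists_forall_ne_isOrd_Lf_add_algebraMap hE hα hg hgf hx1 (by omega)

/-- with `n = 2k`, `α` normal, `g` a monic degree-`k` divisor of `x^n - 1`
with `(x-1) ∣ g`, `f = (x^n-1)/g` and `β = L_f(α)`, there is `u₀ ∈ F_q` with
`Ord(β + u) = g` for all `u ≠ u₀`. -/
theorem stmt4 (q k : ℕ) (hq : IsPrimePow q) (hk : 0 < k)
    (F E : Type*) [Field F] [Fintype F] [Field E] [Fintype E] [Algebra F E]
    (hF : Fintype.card F = q) (hE : Fintype.card E = q ^ (2 * k))
    (α : E) (hα : IskNormal q (2 * k) 0 (F := F) α)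
    (g f : F[X]) (hg : g.Monic) (hgdeg : g.natDegree = k)
    (hgf : g * f = X ^ (2 * k) - 1) (hx1 : (X - 1 : F[X]) ∣ g)
    (β : E) (hβ : β = Lf q f α) :
    ∃ u₀ : F, ∀ u : F, u ≠ u₀ → IsOrd q (β + algebraMap F E u) g :=
  stmt4_general q k hk F E hF hE α hα g f hg hgf hx1 β hβ
end

section
/- Let q be a prime power, k a positive integer, n = 2k, and let g ∈ F_q[x] be a monic divisor of x^n − 1 of degree k. If β ∈ F_{q^n} satisfies Ord(β) = g, then g ≠ x^k − 1 if and only if F_q(β) = F_{q^n}. -/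
open Polynomial

/-!
With `q = #F`, the map `L_f` is the action of `f` through the Frobenius `x ↦ x ^ q`, and
`L_{x^n - 1}(β) = β ^ q ^ n - β`. Hence `Ord(β)` divides `x^n - 1` exactly when
`m = [F(β) : F]` divides `n`. In particular `Ord(β) ∣ x^m - 1`, so `k ≤ m ∣ 2k` and
`m ∈ {k, 2k}`; and `m = k` iff `Ord(β) ∣ x^k - 1` iff `Ord(β) = x^k - 1`, both being monic
of degree `k`.
-/

open FiniteField

section

variable {F E : Type*} [Field F] [Fintype F] [Field E] [Algebra F E]

theorem frobeniusAlgHom_toLinearMap_pow_apply (n : ℕ) (α : E) :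
    ((frobeniusAlgHom F E).toLinearMap ^ n) α = α ^ Fintype.card F ^ n := by
  rw [Module.End.pow_apply, AlgHom.coe_toLinearMap, coe_frobeniusAlgHom, pow_iterate]

theorem Lf_card_eq_aeval (f : F[X]) (α : E) :
    Lf (Fintype.card F) f α = aeval (frobeniusAlgHom F E).toLinearMap f α := by
  rw [Lf, aeval_def, eval₂_eq_sum, Polynomial.sum, Polynomial.sum, LinearMap.sum_apply]
  refine Finset.sum_congr rfl fun i _ => ?_
  rw [Module.End.mul_apply, Module.algebraMap_end_apply, frobeniusAlgHom_toLinearMap_pow_apply,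
    Algebra.smul_def]

theorem Lf_card_mul (f g : F[X]) (α : E) :
    Lf (Fintype.card F) (f * g) α = Lf (Fintype.card F) f (Lf (Fintype.card F) g α) := by
  simp only [Lf_card_eq_aeval, map_mul, Module.End.mul_apply]

theorem Lf_card_sub (f g : F[X]) (α : E) :
    Lf (Fintype.card F) (f - g) α = Lf (Fintype.card F) f α - Lf (Fintype.card F) g α := by
  simp only [Lf_card_eq_aeval, map_sub, LinearMap.sub_apply]

theorem Lf_card_zero (f : F[X]) : Lf (Fintype.card F) f (0 : E) = 0 := by
  rw [Lf_card_eq_aeval, map_zero]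

theorem Lf_card_X_pow_sub_one (n : ℕ) (α : E) :
    Lf (Fintype.card F) (X ^ n - 1 : F[X]) α = α ^ Fintype.card F ^ n - α := by
  rw [Lf_card_eq_aeval, map_sub, map_pow, aeval_X, map_one, LinearMap.sub_apply,
    frobeniusAlgHom_toLinearMap_pow_apply, Module.End.one_apply]

theorem IsOrd.dvd_iff {α : E} {g h : F[X]} (hg : IsOrd (Fintype.card F) α g) :
    g ∣ h ↔ Lf (Fintype.card F) h α = 0 := by
  obtain ⟨hmonic, hLg, hmin⟩ := hg
  constructor
  · rintro ⟨c, rfl⟩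
    rw [mul_comm, Lf_card_mul, hLg, Lf_card_zero]
  intro hLh
  rw [← modByMonic_eq_zero_iff_dvd hmonic]
  by_contra hr
  have hLr : Lf (Fintype.card F) (h %ₘ g) α = 0 := by
    rw [modByMonic_eq_sub_mul_div h g, mul_comm, Lf_card_sub, Lf_card_mul, hLg, Lf_card_zero,
      hLh, sub_zero]
  have hle := hmin _ (monic_mul_leadingCoeff_inv hr)
    (by rw [mul_comm, Lf_card_mul, hLr, Lf_card_zero])
  rw [degree_mul_leadingCoeff_inv _ hr] at hle
  exact (degree_modByMonic_lt h hmonic).not_ge hle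

theorem pow_card_pow_eq_self_iff_natDegree_minpoly_dvd [Finite E] (β : E) (n : ℕ) :
    β ^ Fintype.card F ^ n = β ↔ (minpoly F β).natDegree ∣ n := by
  rw [(minpoly.irreducible (.of_finite F β)).natDegree_dvd_iff_dvd_X_pow_card_pow_sub_X,
    minpoly.dvd_iff, Nat.card_eq_fintype_card, map_sub, map_pow, aeval_X, sub_eq_zero]

variable [Finite E] {β : E} {g : F[X]}

theorem IsOrd.dvd_X_pow_sub_one_iff (hg : IsOrd (Fintype.card F) β g) (n : ℕ) :
    g ∣ X ^ n - 1 ↔ (minpoly F β).natDegree ∣ n := by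
  rw [hg.dvd_iff, Lf_card_X_pow_sub_one, sub_eq_zero,
    pow_card_pow_eq_self_iff_natDegree_minpoly_dvd]

theorem IsOrd.natDegree_le_natDegree_minpoly (hg : IsOrd (Fintype.card F) β g) :
    g.natDegree ≤ (minpoly F β).natDegree := by
  have hm : 0 < (minpoly F β).natDegree := minpoly.natDegree_pos (.of_finite F β)
  have hdvd := (hg.dvd_X_pow_sub_one_iff (minpoly F β).natDegree).2 dvd_rfl
  rw [← C_1] at hdvd
  simpa only [natDegree_X_pow_sub_C] using natDegree_le_of_dvd hdvd (X_pow_sub_C_ne_zero hm 1)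

theorem IsOrd.eq_X_pow_sub_one_iff (hg : IsOrd (Fintype.card F) β g) {k : ℕ} (hk : 0 < k)
    (hgdeg : g.natDegree = k) : g = X ^ k - 1 ↔ (minpoly F β).natDegree ∣ k := by
  have hXk : (X ^ k - 1 : F[X]).Monic := C_1 (R := F) ▸ monic_X_pow_sub_C 1 hk.ne'
  rw [← hg.dvd_X_pow_sub_one_iff]
  refine ⟨fun h => h ▸ dvd_rfl, fun h => ?_⟩
  refine (eq_of_monic_of_dvd_of_natDegree_le hg.1 hXk h ?_).symm
  rw [hgdeg, ← C_1, natDegree_X_pow_sub_C]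

end

theorem stmt5_general (q k : ℕ)
    (F E : Type*) [Field F] [Fintype F] [Field E] [Fintype E] [Algebra F E]
    (hF : Fintype.card F = q) (hE : Fintype.card E = q ^ (2 * k))
    (g : F[X]) (hgdeg : g.natDegree = k)
    (β : E) (hord : IsOrd q β g) :
    g ≠ X ^ k - 1 ↔ Algebra.adjoin F {β} = ⊤ := by
  subst hF
  have hrank : Module.finrank F E = 2 * k :=
    Nat.pow_right_injective Fintype.one_lt_card (Module.card_eq_pow_finrank.symm.trans hE)
  have hk : 0 < k := by have := Module.finrank_pos (R := F) (M := E); omega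
  obtain ⟨m, hm⟩ : ∃ m, (minpoly F β).natDegree = m := ⟨_, rfl⟩
  have hmk : m = k ∨ m = 2 * k := by
    obtain ⟨c, hc⟩ : m ∣ 2 * k := hm ▸ hrank ▸ minpoly.degree_dvd (.of_finite F β)
    have hkm : k ≤ m := hm ▸ hgdeg ▸ hord.natDegree_le_natDegree_minpoly
    have hc2 : c ≤ 2 := by nlinarith
    interval_cases c <;> omega
  rw [← IntermediateField.adjoin_simple_eq_top_iff_of_isAlgebraic (.of_finite F β),
    Field.primitive_element_iff_minpoly_natDegree_eq, hrank, Ne,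
    hord.eq_X_pow_sub_one_iff hk hgdeg, hm]
  rcases hmk with rfl | rfl
  · simp only [dvd_refl, not_true_eq_false, false_iff]
    omega
  · simp only [iff_true]
    exact Nat.not_dvd_of_pos_of_lt hk (by omega)

/-- with `n = 2k`, if `g` is a monic degree-`k` divisor of `x^n - 1` and
`Ord(β) = g`, then `g ≠ x^k - 1` iff `β` generates `F_{q^n}` over `F_q`. -/
theorem stmt5 (q k : ℕ) (hq : IsPrimePow q) (hk : 0 < k)
    (F E : Type*) [Field F] [Fintype F] [Field E] [Fintype E] [Algebra F E]
    (hF : Fintype.card F = q) (hE : Fintype.card E = q ^ (2 * k))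
    (g : F[X]) (hg : g.Monic) (hgdvd : g ∣ (X ^ (2 * k) - 1)) (hgdeg : g.natDegree = k)
    (β : E) (hord : IsOrd q β g) :
    g ≠ X ^ k - 1 ↔ Algebra.adjoin F {β} = ⊤ :=
  stmt5_general q k F E hF hE g hgdeg β hord
end

section
/- Let q be a prime power, k a positive integer, and n = 2k. If the only monic divisors of x^n − 1 of degree k in F_q[x] are x^k − 1 and x^k + 1, then no k-normal element of F_{q^n} over F_q is primitive; that is, F_{q^n} contains no primitive k-normal element over F_q. -/
open Polynomial

/-- with `n = 2k`, if the only monic degree-`k` divisors of `x^n - 1` are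
`x^k - 1` and `x^k + 1`, then `F_{q^n}` has no primitive `k`-normal element over `F_q`. -/
theorem stmt10 (q k : ℕ) (hq : IsPrimePow q) (hk : 0 < k)
    (F E : Type*) [Field F] [Fintype F] [Field E] [Fintype E] [Algebra F E]
    (hF : Fintype.card F = q) (hE : Fintype.card E = q ^ (2 * k))
    (honly : ∀ g : F[X], g.Monic → g ∣ (X ^ (2 * k) - 1) → g.natDegree = k →
      g = X ^ k - 1 ∨ g = X ^ k + 1) :
    ¬ ∃ α : E, IsPrimitiveElem α ∧ IskNormal q (2 * k) k (F := F) α := by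
  classical
  rintro ⟨α, hprim, hnorm⟩
  have hq2 : 2 ≤ q := hq.two_le
  have hqk2 : 2 ≤ q ^ k := le_trans hq2 (Nat.le_self_pow (by omega) q)
  have hE4 : 4 ≤ Fintype.card E := by
    rw [hE]
    calc (4:ℕ) = 2^2 := by norm_num
    _ ≤ q ^ 2 := Nat.pow_le_pow_left hq2 2
    _ ≤ q ^ (2*k) := Nat.pow_le_pow_right (by omega) (by omega)
  have hα0 : α ≠ 0 := by
    rintro rfl
    have h1 : ∀ β : E, β ≠ 0 → β = 1 := by
      intro β hβ
      obtain ⟨j, hj⟩ := hprim β hβ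
      cases j with
      | zero => simpa using hj
      | succ j => rw [zero_pow (Nat.succ_ne_zero j)] at hj; exact absurd hj hβ
    have h2 : (Finset.univ : Finset E).card ≤ ({0, 1} : Finset E).card := by
      apply Finset.card_le_card
      intro x _
      simp only [Finset.mem_insert, Finset.mem_singleton]
      rcases eq_or_ne x 0 with h | h
      · exact Or.inl h
      · exact Or.inr (h1 x h)
    have h3 : ({0,1} : Finset E).card ≤ 2 :=
      (Finset.card_insert_le _ _).trans (by simp)
    rw [Finset.card_univ] at h2
    omega
  set u : Eˣ := Units.mk0 α hα0 with hu
  have hucoe : (u : E) = α := rfl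
  have hord : orderOf u = q ^ (2*k) - 1 := by
    have htop : ∀ v : Eˣ, v ∈ Subgroup.zpowers u := by
      intro v
      obtain ⟨j, hj⟩ := hprim v (Units.ne_zero v)
      refine Subgroup.mem_zpowers_iff.mpr ⟨(j:ℤ), ?_⟩
      apply Units.ext
      rw [zpow_natCast, Units.val_pow_eq_pow_val, hucoe, ← hj]
    rw [orderOf_eq_card_of_forall_mem_zpowers htop, Nat.card_eq_fintype_card, Fintype.card_units, hE]
  obtain ⟨p, m, hp, hm, rfl⟩ := hq
  have hpp : p.Prime := Nat.prime_iff.mpr hp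
  haveI hfp : Fact p.Prime := ⟨hpp⟩
  haveI hcharE : CharP E p := by
    have h := ringChar.charP E
    obtain ⟨s, hps, hcard⟩ := FiniteField.card E (ringChar E)
    have hrp : ringChar E = p := by
      have h1 : ringChar E ∣ (p^m) ^ (2*k) := by
        rw [← hE, hcard]
        exact dvd_pow_self _ (by exact_mod_cast s.ne_zero)
      rw [← pow_mul] at h1
      exact (Nat.prime_dvd_prime_iff_eq hps hpp).mp (hps.dvd_of_dvd_pow h1)
    rwa [hrp] at h
  have hsmul : ∀ (a : F) (x : E), (a • x) ^ p ^ m = a • x ^ p ^ m := by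
    intro a x
    rw [_root_.smul_pow]
    congr 1
    have := FiniteField.pow_card a
    rwa [hF] at this
  set T : E →ₗ[F] E :=
    { toFun := fun x => x ^ p ^ m
      map_add' := fun x y => add_pow_char_pow x y p m
      map_smul' := fun a x => hsmul a x } with hTdef
  have hT : ∀ x : E, T x = x ^ p ^ m := fun _ => rfl
  have hTpow : ∀ (i : ℕ) (x : E), (T ^ i) x = x ^ (p ^ m) ^ i := by
    intro i
    induction i with
    | zero => intro x; simp
    | succ i ih =>
      intro x
      rw [pow_succ', Module.End.mul_apply, hT, ih, ← pow_mul, ← pow_succ]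
  set I : Ideal F[X] :=
    { carrier := {f : F[X] | (Polynomial.aeval T f) α = 0}
      add_mem' := by
        intro f g hf hg
        simp only [Set.mem_setOf_eq, map_add, LinearMap.add_apply] at *
        rw [hf, hg, add_zero]
      zero_mem' := by simp
      smul_mem' := by
        intro c f hf
        simp only [Set.mem_setOf_eq, smul_eq_mul, map_mul, Module.End.mul_apply] at *
        rw [hf, map_zero] } with hIdef
  have hmemI : ∀ f : F[X], f ∈ I ↔ (Polynomial.aeval T f) α = 0 := fun f => Iff.rfl
  have hXnne : (X ^ (2*k) - 1 : F[X]) ≠ 0 := by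
    have := X_pow_sub_C_ne_zero (R := F) (show 0 < 2*k by omega) 1
    rwa [map_one] at this
  have hXn : (X ^ (2*k) - 1 : F[X]) ∈ I := by
    rw [hmemI, map_sub, map_pow, aeval_X, map_one, LinearMap.sub_apply,
      Module.End.one_apply, hTpow, ← hE, sub_eq_zero]
    exact FiniteField.pow_card α
  obtain ⟨g0, hg0''⟩ := (IsPrincipalIdealRing.principal I).principal
  have hg0 : I = Ideal.span {g0} := hg0''
  have hg0ne : g0 ≠ 0 := by
    rintro rfl
    rw [hg0, Ideal.mem_span_singleton] at hXn
    exact hXnne (zero_dvd_iff.mp hXn)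
  set g : F[X] := normalize g0 with hgdef
  have hgmonic : g.Monic := monic_normalize hg0ne
  have hgne : g ≠ 0 := hgmonic.ne_zero
  have hIiff : ∀ f : F[X], (Polynomial.aeval T f) α = 0 ↔ g ∣ f := by
    intro f
    rw [← hmemI, hg0, Ideal.mem_span_singleton, hgdef, normalize_dvd_iff]
  have hgα : (Polynomial.aeval T g) α = 0 := (hIiff g).mpr dvd_rfl
  have hgdvdXn : g ∣ (X ^ (2*k) - 1 : F[X]) := (hIiff _).mp ((hmemI _).mp hXn)
  set d : ℕ := g.natDegree with hddef
  have hd1 : 0 < d := by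
    rcases Nat.eq_zero_or_pos d with h | h
    · exfalso
      have hg1 : g = 1 := hgmonic.natDegree_eq_zero.mp h
      rw [hg1, map_one, Module.End.one_apply] at hgα
      exact hα0 hgα
    · exact h
  have hdle : d ≤ 2*k := by
    have h1 := natDegree_le_of_dvd hgdvdXn hXnne
    have h2 : (X^(2*k) - 1 : F[X]).natDegree = 2*k := by
      simpa using natDegree_X_pow_sub_C (n := 2*k) (r := (1:F))
    rw [h2] at h1
    exact h1
  set b : Fin d → E := fun i => α ^ (p^m) ^ (i : ℕ) with hbdef
  have hbT : ∀ i : Fin d, b i = (T ^ (i:ℕ)) α := fun i => (hTpow _ _).symm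
  have hlinind : LinearIndependent F b := by
    rw [Fintype.linearIndependent_iff]
    intro c hc
    set h : F[X] := ∑ i : Fin d, (monomial (i:ℕ) (c i)) with hhdef
    have haev : (Polynomial.aeval T h) α = 0 := by
      rw [hhdef, map_sum, LinearMap.sum_apply, ← hc]
      apply Finset.sum_congr rfl
      intro i _
      rw [aeval_monomial, Module.End.mul_apply, Module.algebraMap_end_apply, hbT]
    have hh0 : h = 0 := by
      by_contra hne
      have hgd : g.degree = (d : WithBot ℕ) := degree_eq_natDegree hgne 
      have h1 : (d : WithBot ℕ) ≤ h.degree :=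
        hgd ▸ degree_le_of_dvd ((hIiff h).mp haev) hne
      have h2 : h.degree < (d : WithBot ℕ) := by
        apply lt_of_le_of_lt (degree_sum_le _ _)
        refine (Finset.sup_lt_iff (WithBot.bot_lt_coe d)).mpr ?_
        intro j _
        exact lt_of_le_of_lt (degree_monomial_le _ _) (by exact WithBot.coe_lt_coe.mpr j.isLt)
      exact absurd (lt_of_le_of_lt h1 h2) (lt_irrefl _)
    intro i
    have hco : h.coeff (i:ℕ) = c i := by
      rw [hhdef, finset_sum_coeff, Finset.sum_eq_single i]
      · rw [coeff_monomial, if_pos rfl]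
      · intro j _ hne
        rw [coeff_monomial, if_neg (fun hji => hne (Fin.ext hji))]
      · intro hni; exact absurd (Finset.mem_univ i) hni
    rw [hh0, coeff_zero] at hco
    exact hco.symm
  set Vd : Submodule F E := Submodule.span F (Set.range b) with hVddef
  have hbmem : ∀ i : ℕ, i < d → (T ^ i) α ∈ Vd := by
    intro i hi
    apply Submodule.subset_span
    exact ⟨⟨i, hi⟩, hbT ⟨i, hi⟩⟩
  have hTd : (T ^ d) α ∈ Vd := by
    have hrel := hgα
    rw [aeval_eq_sum_range, LinearMap.sum_apply, ← hddef, Finset.sum_range_succ,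
      LinearMap.smul_apply] at hrel
    have hlc : g.coeff d = 1 := hddef ▸ hgmonic.coeff_natDegree
    rw [hlc, one_smul] at hrel
    rw [eq_neg_of_add_eq_zero_right hrel]
    apply Submodule.neg_mem
    apply Submodule.sum_mem
    intro i hi
    rw [LinearMap.smul_apply]
    exact Submodule.smul_mem _ _ (hbmem i (Finset.mem_range.mp hi))
  have hstep : Submodule.map T Vd ≤ Vd := by
    rw [hVddef, Submodule.map_span, Submodule.span_le]
    rintro x ⟨y, ⟨j, rfl⟩, rfl⟩
    rw [hbT, ← Module.End.mul_apply, ← pow_succ']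
    rcases Nat.lt_or_ge ((j:ℕ)+1) d with hlt | hge
    · exact hbmem _ hlt
    · have hjd : (j:ℕ)+1 = d := by omega
      rw [hjd]; exact hTd
  have hall : ∀ i : ℕ, (T ^ i) α ∈ Vd := by
    intro i
    induction i with
    | zero =>
      have := hbmem 0 hd1
      simpa using this
    | succ i ih =>
      rw [pow_succ', Module.End.mul_apply]
      exact hstep (Submodule.mem_map_of_mem ih)
  have hspan_eq : Submodule.span F (Set.range fun i : Fin (2*k) => α ^ (p^m) ^ (i:ℕ)) = Vd := by
    apply le_antisymm
    · rw [Submodule.span_le]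
      rintro x ⟨i, rfl⟩
      have := hall (i:ℕ)
      rwa [hTpow] at this
    · rw [hVddef, Submodule.span_le]
      rintro x ⟨j, rfl⟩
      apply Submodule.subset_span
      exact ⟨⟨(j:ℕ), lt_of_lt_of_le j.isLt hdle⟩, rfl⟩
  have hdk : d = k := by
    have h1 : Module.finrank F
        ↥(Submodule.span F (Set.range fun i : Fin (2*k) => α ^ (p^m) ^ (i:ℕ))) = 2*k - k := hnorm
    rw [hspan_eq, hVddef, finrank_span_eq_card hlinind, Fintype.card_fin] at h1
    omega
  have hsq : α ^ (p^m)^k * α ^ (p^m)^k = α * α := by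
    have h := hgα
    rcases honly g hgmonic hgdvdXn (hddef.symm.trans hdk) with hcase | hcase
    · rw [hcase, map_sub, map_pow, aeval_X, map_one, LinearMap.sub_apply,
        Module.End.one_apply, hTpow, sub_eq_zero] at h
      rw [h]
    · rw [hcase, map_add, map_pow, aeval_X, map_one, LinearMap.add_apply,
        Module.End.one_apply, hTpow] at h
      rw [eq_neg_of_add_eq_zero_left h, neg_mul_neg]
  set a : ℕ := (p^m)^k with hadef
  have ha2 : 2 ≤ a := hqk2
  have hpow1 : α ^ (2*(a-1)) = 1 := by
    have h1 : α ^ (2*(a-1)) * (α * α) = α * α := by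
      have hexp : 2*(a-1) + 2 = a + a := by omega
      calc α ^ (2*(a-1)) * (α * α) = α ^ (2*(a-1) + 2) := by ring
      _ = α ^ (a + a) := by rw [hexp]
      _ = α ^ a * α ^ a := pow_add α a a
      _ = α * α := hsq
    have h2 : α ^ (2*(a-1)) * (α * α) = 1 * (α * α) := by rw [one_mul]; exact h1
    exact mul_right_cancel₀ (mul_ne_zero hα0 hα0) h2
  have hu1 : u ^ (2*(a-1)) = 1 :=
    Units.ext (by rw [Units.val_pow_eq_pow_val, hucoe, hpow1, Units.val_one])
  have hdvd2 : orderOf u ∣ 2*(a-1) := orderOf_dvd_of_pow_eq_one hu1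
  rw [hord] at hdvd2
  have hle2 : (p^m)^(2*k) - 1 ≤ 2*(a-1) := Nat.le_of_dvd (by omega) hdvd2
  have hsq2 : (p^m)^(2*k) = a * a := by
    rw [hadef, two_mul, pow_add]
  have h2a : 2*a ≤ a*a := Nat.mul_le_mul_right a ha2
  rw [hsq2] at hle2
  obtain ⟨bb, hbb⟩ : ∃ bb, a * a = bb := ⟨_, rfl⟩
  rw [hbb] at hle2 h2a
  omega
end

section
/- Let p be an odd prime number, q = p^m a power of p, and k = 2^s · t ≥ 2 with s ≥ 0 and t an odd positive integer; let n = 2k. The polynomial x^n − 1 has a monic divisor g ∈ F_q[x] satisfying property (A) if and only if one of the following conditions holds: (i) t > 1; (ii) t = 1 and m is even; (iii) t = 1, m is odd and ord_{2^{s+1}}(p) < 2^s, where ord_{2^{s+1}}(p) denotes the multiplicative order of p modulo 2^{s+1}. -/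
open Polynomial

section Helpers

open Polynomial

variable {F : Type*} [Field F]

private lemma sa_helper (H : ℕ) (hH : 1 ≤ H) (w w' : F[X])
    (hw : w.Monic) (hdeg : w.natDegree = H) (hmul : w * w' = X ^ (2 * H) + 1)
    (hne : w ≠ X ^ H + 1) :
    ∃ g : F[X], SatisfiesA (2 * H) g := by
  have h1 : ((X : F[X]) ^ H - 1).Monic := by
    simpa using monic_X_pow_sub_C (1 : F) (by omega : H ≠ 0)
  have hd1 : ((X : F[X]) ^ H - 1).natDegree = H := by
    simpa using natDegree_X_pow_sub_C (n := H) (r := (1 : F))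
  have hsplit : ((X : F[X]) ^ H - 1) * (X ^ H + 1) = X ^ (2 * H) - 1 := by
    rw [two_mul, pow_add]; ring
  have hsplit2 : ((X : F[X]) ^ (2 * H) - 1) * (X ^ (2 * H) + 1) = X ^ (2 * (2 * H)) - 1 := by
    rw [two_mul (2 * H), pow_add]; ring
  refine ⟨(X ^ H - 1) * w, h1.mul hw, ?_, ?_, ?_, ?_⟩
  · rw [← hsplit2]
    exact mul_dvd_mul ⟨X ^ H + 1, hsplit.symm⟩ ⟨w', hmul.symm⟩
  · rw [h1.natDegree_mul hw, hdeg, hd1, two_mul]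
  · intro hEq
    apply hne
    have : ((X : F[X]) ^ H - 1) * w = (X ^ H - 1) * (X ^ H + 1) := by
      rw [hEq, hsplit]
    exact mul_left_cancel₀ h1.ne_zero this
  · exact dvd_mul_of_dvd_left (by simpa using sub_dvd_pow_sub_pow (X : F[X]) 1 H) w

private lemma sa_i (h2 : (2 : F) ≠ 0) (H : ℕ) (hH : 1 ≤ H) (i : F) (hi : i * i = -1) :
    ∃ g : F[X], SatisfiesA (2 * H) g := by
  apply sa_helper H hH (X ^ H - C i) (X ^ H + C i)
  · exact monic_X_pow_sub_C i (by omega)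
  · exact natDegree_X_pow_sub_C
  · have h : ((X : F[X]) ^ H - C i) * (X ^ H + C i) = X ^ (2 * H) - C (i * i) := by
      rw [two_mul, pow_add, C_mul]; ring
    rw [h, hi]
    simp [sub_neg_eq_add]
  · intro hEq
    have h0 : -i = (1 : F) := by
      have hne0 : ¬ (0 : ℕ) = H := by omega
      have hc := congrArg (fun q : F[X] => q.coeff 0) hEq
      simpa [coeff_X_pow, hne0] using hc
    exact h2 (by linear_combination (i - 1) * h0 + hi)

private lemma sa_ab (h2 : (2 : F) ≠ 0) (Q : ℕ) (hQ : 1 ≤ Q) (a b : F)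
    (hb : b * b = 1) (ha : a * a = 2 * b) :
    ∃ g : F[X], SatisfiesA (2 * (2 * Q)) g := by
  have haz : a ≠ 0 := by
    intro h0
    apply h2
    calc (2 : F) = 2 * (b * b) := by rw [hb, mul_one]
    _ = (a * a) * b := by rw [ha]; ring
    _ = 0 := by rw [h0]; ring
  have hrlt : (C a * X ^ Q + C b : F[X]).degree < ((2 * Q : ℕ) : WithBot ℕ) := by
    apply lt_of_le_of_lt (degree_add_le _ _)
    apply max_lt
    · apply lt_of_le_of_lt (degree_mul_le _ _)
      apply lt_of_le_of_lt (add_le_add degree_C_le (le_of_eq (degree_X_pow Q)))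
      rw [zero_add]
      exact_mod_cast (by omega : Q < 2 * Q)
    · exact lt_of_le_of_lt degree_C_le (by exact_mod_cast (by omega : 0 < 2 * Q))
  have hweq : (X ^ (2 * Q) + C a * X ^ Q + C b : F[X])
      = X ^ (2 * Q) + (C a * X ^ Q + C b) := by ring
  have hwm : (X ^ (2 * Q) + C a * X ^ Q + C b : F[X]).Monic := by
    rw [hweq]
    exact monic_X_pow_add hrlt
  apply sa_helper (2 * Q) (by omega) (X ^ (2 * Q) + C a * X ^ Q + C b)
      (X ^ (2 * Q) - C a * X ^ Q + C b) hwm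
  · have hrlt2 : (C a * X ^ Q + C b : F[X]).degree < ((X : F[X]) ^ (2 * Q)).degree := by
      rwa [degree_X_pow]
    have hdegw : (X ^ (2 * Q) + C a * X ^ Q + C b : F[X]).degree = ((2 * Q : ℕ) : WithBot ℕ) := by
      rw [hweq, degree_add_eq_left_of_degree_lt hrlt2, degree_X_pow]
    exact natDegree_eq_of_degree_eq_some hdegw
  · have key : (X ^ (2 * Q) + C a * X ^ Q + C b : F[X]) * (X ^ (2 * Q) - C a * X ^ Q + C b)
        = X ^ (2 * (2 * Q)) + (C (2 * b) - C (a * a)) * X ^ (2 * Q) + C (b * b) := by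
      rw [C_mul, C_mul, C_mul]
      rw [map_ofNat C 2]
      ring
    rw [key, ha, hb]
    simp only [sub_self, zero_mul, add_zero, map_one]
  · intro hEq
    apply haz
    have hq1 : ¬ Q = 2 * Q := by omega
    have hq2 : ¬ Q = 0 := by omega
    have h0 := congrArg (fun q : F[X] => q.coeff Q) hEq
    simpa [coeff_X_pow, coeff_C, coeff_one, hq1, hq2] using h0

private lemma sa_t (h2 : (2 : F) ≠ 0) (s t : ℕ) (ht : Odd t) (ht1 : 1 < t) :
    ∃ g : F[X], SatisfiesA (2 ^ s * t) g := by
  set k := 2 ^ s * t with hk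
  have hdvd1 : ((X : F[X]) ^ (2 ^ s) + 1) ∣ X ^ k + 1 := by
    have hd := Odd.add_dvd_pow_add_pow ((X : F[X]) ^ (2 ^ s)) 1 ht
    rwa [← pow_mul, one_pow, ← hk] at hd
  obtain ⟨h, hh⟩ := hdvd1
  have hmonA : ((X : F[X]) ^ (2 ^ s) + 1).Monic := by
    simpa using monic_X_pow_add_C (R := F) (a := 1) (by positivity : (2:ℕ) ^ s ≠ 0)
  have hmonK : ((X : F[X]) ^ k + 1).Monic := by
    simpa using monic_X_pow_add_C (R := F) (a := 1)
      (by have := ht.pos; positivity : k ≠ 0)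
  have hmonh : h.Monic := by
    apply hmonA.of_mul_monic_left
    rw [← hh]; exact hmonK
  have hdK : ((X : F[X]) ^ k + 1).natDegree = k := by
    simpa using natDegree_X_pow_add_C (n := k) (r := (1 : F))
  have hdA : ((X : F[X]) ^ (2 ^ s) + 1).natDegree = 2 ^ s := by
    simpa using natDegree_X_pow_add_C (n := 2 ^ s) (r := (1 : F))
  have hdegh : k = 2 ^ s + h.natDegree := by
    have h1 := hdK
    rw [hh, hmonA.natDegree_mul hmonh, hdA] at h1
    omega
  have hmonB : ((X : F[X]) ^ (2 ^ s) - 1).Monic := by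
    simpa using monic_X_pow_sub_C (1 : F) (by positivity : (2:ℕ) ^ s ≠ 0)
  refine ⟨(X ^ (2 ^ s) - 1) * h, hmonB.mul hmonh, ?_, ?_, ?_, ?_⟩
  · have hsplit : ((X : F[X]) ^ k - 1) * (X ^ k + 1) = X ^ (2 * k) - 1 := by
      rw [two_mul, pow_add]; ring
    rw [← hsplit]
    refine mul_dvd_mul ?_ ⟨X ^ (2 ^ s) + 1, by rw [hh]; ring⟩
    have hd := sub_dvd_pow_sub_pow ((X : F[X]) ^ (2 ^ s)) 1 t
    rwa [← pow_mul, one_pow, ← hk] at hd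
  · have hdB : ((X : F[X]) ^ (2 ^ s) - 1).natDegree = 2 ^ s := by
      simpa using natDegree_X_pow_sub_C (n := 2 ^ s) (r := (1 : F))
    rw [hmonB.natDegree_mul hmonh, hdB]
    omega
  · intro hEq
    have h2' : (2 : F[X]) ≠ 0 := fun hc => h2 (by simpa using congrArg (eval 0) hc)
    have hone : (2 : F[X]) * h = 2 * 1 := by
      rw [mul_one]
      linear_combination - hh - hEq
    have hh1 : h = 1 := mul_left_cancel₀ h2' hone
    rw [hh1, mul_one] at hh
    have : k = 2 ^ s := by
      have hnd := congrArg natDegree hh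
      rw [hdK, hdA] at hnd
      exact hnd
    have hpos : 0 < 2 ^ s := by positivity
    rw [hk] at this
    nlinarith
  · apply dvd_mul_of_dvd_left
    simpa using sub_dvd_pow_sub_pow (X : F[X]) 1 (2 ^ s)

private lemma no_g (h4 : (4 : F) ≠ 0) (hns : ∀ x : F, x * x ≠ -1) (g : F[X]) :
    ¬ SatisfiesA 2 g := by
  rintro ⟨hmon, hdvd, hdeg, hne, u, hu⟩
  have hX1 : ((X : F[X]) - 1).Monic := by simpa using monic_X_sub_C (1 : F)
  have hu_monic : u.Monic := by
    apply hX1.of_mul_monic_left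
    rw [← hu]; exact hmon
  have hdegu : u.natDegree = 1 := by
    have h1 := hX1.natDegree_mul hu_monic
    rw [← hu, hdeg] at h1
    have hX1d : ((X : F[X]) - 1).natDegree = 1 := by
      simpa using natDegree_X_sub_C (1 : F)
    omega
  have hu_eq : u = X + C (u.coeff 0) := hu_monic.eq_X_add_C hdegu
  set c := u.coeff 0 with hc
  obtain ⟨v, hv⟩ := hdvd
  have hroot : (-c : F) ^ (2 * 2) - 1 = 0 := by
    have h0 := congrArg (eval (-c)) hv
    rw [hu, hu_eq] at h0
    simpa using h0
  have h1 : ((-c : F) ^ 2 - 1) * ((-c) ^ 2 + 1) = 0 := by linear_combination hroot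
  rcases mul_eq_zero.mp h1 with h | h
  · have h2 : ((-c : F) - 1) * ((-c) + 1) = 0 := by linear_combination h
    rcases mul_eq_zero.mp h2 with h' | h'
    · -- c = -1 : g = (X-1)^2 divides a squarefree polynomial
      have hceq : c = -1 := by linear_combination -h'
      have hgeq : g = (X - 1) * (X - 1) := by
        rw [hu, hu_eq, hceq]
        simp only [map_neg, map_one]
        ring
      have hsf : Squarefree ((X : F[X]) ^ (2 * 2) - 1) := by
        have hsep : ((X : F[X]) ^ 4 - C 1).Separable := by
          apply separable_X_pow_sub_C (1 : F) _ one_ne_zero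
          intro hc4
          apply h4
          exact_mod_cast hc4
        have : ((X : F[X]) ^ (2 * 2) - 1) = X ^ 4 - C 1 := by norm_num
        rw [this]
        exact hsep.squarefree
      have hunit : IsUnit ((X : F[X]) - 1) := by
        apply hsf
        rw [← hgeq]
        exact ⟨v, hv⟩
      have := not_isUnit_X_sub_C (1 : F)
      simp only [map_one] at this
      exact this hunit
    · -- c = 1 : g = X^2 - 1
      apply hne
      have hceq : c = 1 := by linear_combination -h'
      rw [hu, hu_eq, hceq]
      simp only [map_one]
      ring
  · exact hns (-c) (by linear_combination h)

end Helpers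

private lemma int_two_pow_dvd (p : ℕ) (hp : Odd p) :
    ∀ e : ℕ, ((2 : ℤ) ^ (e + 3)) ∣ (p : ℤ) ^ (2 ^ (e + 1)) - 1 := by
  intro e
  induction e with
  | zero =>
    obtain ⟨c, hc⟩ := hp
    obtain ⟨d, hd⟩ := Int.even_mul_succ_self (c : ℤ)
    have h : ((p : ℤ)) ^ (2 ^ (0 + 1)) - 1 = 4 * ((c : ℤ) * (c + 1)) := by
      push_cast [hc]; ring
    rw [h, hd]
    exact ⟨d, by ring⟩
  | succ e ih =>
    have h1 : (p : ℤ) ^ (2 ^ (e + 1 + 1)) - 1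
        = ((p : ℤ) ^ (2 ^ (e + 1)) - 1) * ((p : ℤ) ^ (2 ^ (e + 1)) + 1) := by
      rw [pow_succ (2 : ℕ) (e + 1), pow_mul]; ring
    have hodd : Odd ((p : ℤ) ^ (2 ^ (e + 1))) := by
      have hoz : Odd (p : ℤ) := (Int.odd_coe_nat p).mpr hp
      exact hoz.pow
    obtain ⟨c, hc⟩ := hodd
    have h2 : (2 : ℤ) ∣ (p : ℤ) ^ (2 ^ (e + 1)) + 1 := ⟨c + 1, by rw [hc]; ring⟩
    rw [h1]
    have h3 : (2 : ℤ) ^ (e + 1 + 3) = 2 ^ (e + 3) * 2 := by ring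
    rw [h3]
    exact mul_dvd_mul ih h2

private lemma ord_lt_of_two_le (p s : ℕ) (hp : Odd p) (hs : 2 ≤ s) :
    orderOf ((p : ZMod (2 ^ (s + 1)))) < 2 ^ s := by
  have hdvd := int_two_pow_dvd p hp (s - 2)
  have hse : s - 2 + 3 = s + 1 := by omega
  have hse2 : s - 2 + 1 = s - 1 := by omega
  rw [hse, hse2] at hdvd
  have hcast : (p : ZMod (2 ^ (s + 1))) ^ (2 ^ (s - 1)) = 1 := by
    have h0 : ((((p : ℤ) ^ (2 ^ (s - 1)) - 1 : ℤ)) : ZMod (2 ^ (s + 1))) = 0 := by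
      rw [ZMod.intCast_zmod_eq_zero_iff_dvd]
      exact_mod_cast hdvd
    push_cast at h0
    linear_combination h0
  have hord : orderOf ((p : ZMod (2 ^ (s + 1)))) ∣ 2 ^ (s - 1) :=
    orderOf_dvd_of_pow_eq_one hcast
  calc orderOf ((p : ZMod (2 ^ (s + 1)))) ≤ 2 ^ (s - 1) :=
        Nat.le_of_dvd (by positivity) hord
    _ < 2 ^ s := Nat.pow_lt_pow_right one_lt_two (by omega)

private lemma pow_mod4_one (p m : ℕ) (h : p % 4 = 1) : p ^ m % 4 = 1 := by
  rw [Nat.pow_mod, h, one_pow]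
  rfl

private lemma pow_mod4_three_even (p m : ℕ) (h : p % 4 = 3) (hm : Even m) : p ^ m % 4 = 1 := by
  obtain ⟨j, hj⟩ := hm
  subst hj
  rw [← two_mul, pow_mul, Nat.pow_mod, Nat.pow_mod p, h]
  norm_num [Nat.pow_mod]

private lemma pow_mod4_three_odd (p m : ℕ) (h : p % 4 = 3) (hm : Odd m) : p ^ m % 4 = 3 := by
  obtain ⟨j, hj⟩ := hm
  subst hj
  rw [pow_succ, Nat.mul_mod, pow_mul, Nat.pow_mod, Nat.pow_mod p, h]
  norm_num [Nat.pow_mod]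

private lemma cast_mod4 (p : ℕ) (r : ℕ) (h : p % 4 = r) : (p : ZMod 4) = (r : ZMod 4) := by
  rw [← ZMod.natCast_mod p 4, h]

open Polynomial in
private lemma backward_t1 {F : Type*} [Field F] [Fintype F] (h2 : (2 : F) ≠ 0) (s : ℕ)
    (hs : 1 ≤ s) (hkey : IsSquare (-1 : F) ∨ 2 ≤ s) : ∃ g : F[X], SatisfiesA (2 ^ s) g := by
  classical
  by_cases hsq : IsSquare (-1 : F)
  · obtain ⟨i, hi⟩ := hsq
    have hpow : (2 : ℕ) ^ s = 2 * 2 ^ (s - 1) := by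
      rw [← pow_succ']
      congr 1
      omega
    rw [hpow]
    exact sa_i h2 (2 ^ (s - 1)) (Nat.one_le_two_pow) i hi.symm
  · have hs2 : 2 ≤ s := hkey.resolve_left hsq
    have hpow : (2 : ℕ) ^ s = 2 * (2 * 2 ^ (s - 2)) := by
      rw [← pow_succ', ← pow_succ']
      congr 1
      omega
    rw [hpow]
    by_cases hsq2 : IsSquare (2 : F)
    · obtain ⟨a, ha⟩ := hsq2
      exact sa_ab h2 (2 ^ (s - 2)) Nat.one_le_two_pow a 1 (by ring) (by rw [← ha]; ring)
    · have hsqn2 : IsSquare (-2 : F) := by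
        have hχ1 : quadraticChar F (-1) = -1 :=
          quadraticChar_neg_one_iff_not_isSquare.mpr hsq
        have hχ2 : quadraticChar F 2 = -1 :=
          quadraticChar_neg_one_iff_not_isSquare.mpr hsq2
        have hval : quadraticChar F (-2) = 1 := by
          have hm2 : (-2 : F) = (-1) * 2 := by ring
          rw [hm2, map_mul, hχ1, hχ2]; ring
        exact (quadraticChar_one_iff_isSquare (neg_ne_zero.mpr h2)).mp hval
      obtain ⟨a, ha⟩ := hsqn2
      exact sa_ab h2 (2 ^ (s - 2)) Nat.one_le_two_pow a (-1) (by ring) (by rw [← ha]; ring)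
/-- for `q = p^m` with `p` an odd prime and `k = 2^s·t ≥ 2` with `t` odd,
`x^{2k} - 1 ∈ F_q[x]` has a divisor satisfying property (A) iff `t > 1`, or `t = 1` and
`m` is even, or `t = 1`, `m` is odd and `ord_{2^{s+1}}(p) < 2^s`. -/
theorem stmt12 (p m s t : ℕ) (hp : p.Prime) (hpodd : Odd p) (hm : 1 ≤ m)
    (ht : Odd t) (hk : 2 ≤ 2 ^ s * t)
    (F : Type*) [Field F] [Fintype F] (hF : Fintype.card F = p ^ m) :
    (∃ g : F[X], SatisfiesA (2 ^ s * t) g) ↔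
      (1 < t ∨ (t = 1 ∧ Even m) ∨
        (t = 1 ∧ Odd m ∧ orderOf (p : ZMod (2 ^ (s + 1))) < 2 ^ s)) := by
  classical
  -- characteristic facts
  haveI := ringChar.charP F
  obtain ⟨n, hrpr, hcard⟩ := FiniteField.card F (ringChar F)
  have hchar : ringChar F = p := by
    have hd : ringChar F ∣ p ^ m := by
      rw [← hF, hcard]
      exact dvd_pow_self _ (by exact_mod_cast n.pos.ne')
    exact (Nat.prime_dvd_prime_iff_eq hrpr hp).mp (hrpr.dvd_of_dvd_pow hd)
  have hpne2 : p ≠ 2 := by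
    intro h
    rw [h] at hpodd
    exact (Nat.not_odd_iff_even.mpr even_two) hpodd
  have h2F : (2 : F) ≠ 0 := by
    intro hc
    have h2' : ((2 : ℕ) : F) = 0 := by exact_mod_cast hc
    have hd := (CharP.cast_eq_zero_iff F (ringChar F) 2).mp h2'
    rw [hchar] at hd
    exact hpne2 ((Nat.prime_dvd_prime_iff_eq hp Nat.prime_two).mp hd)
  have h4F : (4 : F) ≠ 0 := by
    intro hc
    have h4' : ((4 : ℕ) : F) = 0 := by exact_mod_cast hc
    have hd := (CharP.cast_eq_zero_iff F (ringChar F) 4).mp h4'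
    rw [hchar] at hd
    have hd4 : p ∣ 2 ^ 2 := by
      rw [(by norm_num : (2 : ℕ) ^ 2 = 4)]
      exact hd
    exact hpne2 ((Nat.prime_dvd_prime_iff_eq hp Nat.prime_two).mp (hp.dvd_of_dvd_pow hd4))
  have hp4 : p % 4 = 1 ∨ p % 4 = 3 := by
    have h1 : p % 2 = 1 := Nat.odd_iff.mp hpodd
    omega
  have htpos : 0 < t := ht.pos
  constructor
  · rintro ⟨g, hg⟩
    by_contra hR
    push_neg at hR
    obtain ⟨hR1, hR2, hR3⟩ := hR
    have ht1 : t = 1 := by omega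
    subst ht1
    have hs1 : 1 ≤ s := by
      rcases Nat.eq_zero_or_pos s with h | h
      · rw [h] at hk; norm_num at hk
      · exact h
    have hmodd : Odd m := by
      rcases Nat.even_or_odd m with h | h
      · exact absurd h (hR2 rfl)
      · exact h
    have hord : 2 ^ s ≤ orderOf (p : ZMod (2 ^ (s + 1))) := hR3 rfl hmodd
    have hseq : s = 1 := by
      by_contra hne
      have h2s : 2 ≤ s := by omega
      exact absurd (ord_lt_of_two_le p s hpodd h2s) (not_lt.mpr hord)
    subst hseq
    have hp3 : p % 4 = 3 := by
      rcases hp4 with h1 | h3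
      · exfalso
        have : (p : ZMod (2 ^ (1 + 1))) = 1 := by
          have := cast_mod4 p 1 h1
          simpa using this
        rw [this, orderOf_one] at hord
        omega
      · exact h3
    have hcard3 : Fintype.card F % 4 = 3 := by
      rw [hF]; exact pow_mod4_three_odd p m hp3 hmodd
    have hns : ¬ IsSquare (-1 : F) := by
      rw [FiniteField.isSquare_neg_one_iff]
      simp [hcard3]
    have hg2 : SatisfiesA 2 g := by
      have : (2 : ℕ) ^ 1 * 1 = 2 := by norm_num
      rwa [this] at hg
    exact no_g h4F (fun x hx => hns ⟨x, hx.symm⟩) g hg2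
  · intro hR
    rcases hR with ht1 | ⟨ht1, hme⟩ | ⟨ht1, hmo, hord⟩
    · exact sa_t h2F s t ht ht1
    · subst ht1
      rw [mul_one] at hk ⊢
      have hs1 : 1 ≤ s := by
        rcases Nat.eq_zero_or_pos s with h | h
        · rw [h] at hk; norm_num at hk
        · exact h
      apply backward_t1 h2F s hs1
      left
      rw [FiniteField.isSquare_neg_one_iff, hF]
      rcases hp4 with h1 | h3
      · rw [pow_mod4_one p m h1]; omega
      · rw [pow_mod4_three_even p m h3 hme]; omega
    · subst ht1
      rw [mul_one] at hk ⊢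
      have hs1 : 1 ≤ s := by
        rcases Nat.eq_zero_or_pos s with h | h
        · rw [h] at hk; norm_num at hk
        · exact h
      apply backward_t1 h2F s hs1
      by_cases hs2 : 2 ≤ s
      · right; exact hs2
      · left
        have hseq : s = 1 := by omega
        subst hseq
        have hp1 : p % 4 = 1 := by
          rcases hp4 with h1 | h3
          · exact h1
          · exfalso
            have hcast : (p : ZMod (2 ^ (1 + 1))) = 3 := by
              have := cast_mod4 p 3 h3
              simpa using this
            have hordd : orderOf (p : ZMod (2 ^ (1 + 1))) ∣ 2 := by
              apply orderOf_dvd_of_pow_eq_one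
              rw [hcast]; decide
            have hne1 : orderOf (p : ZMod (2 ^ (1 + 1))) ≠ 1 := by
              intro h1'
              have := orderOf_eq_one_iff.mp h1'
              rw [hcast] at this
              exact absurd this (by decide)
            rcases (Nat.Prime.eq_one_or_self_of_dvd Nat.prime_two _ hordd) with h' | h'
            · exact hne1 h'
            · rw [h'] at hord
              simp at hord
        rw [FiniteField.isSquare_neg_one_iff, hF, pow_mod4_one p m hp1]
        omega
end

section
/- Let q = 2^m with m ≥ 1 and let k = 2^s with s ≥ 0. Then F_{q^{2k}} contains no element that is simultaneously primitive and k-normal over F_q. -/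
open Polynomial

/-- for `q = 2^m` with `m ≥ 1` and `k = 2^s`, the field `F_{q^{2k}}`
contains no primitive `k`-normal element over `F_q`. -/
theorem stmt13 (m s : ℕ) (hm : 1 ≤ m)
    (F E : Type*) [Field F] [Fintype F] [Field E] [Fintype E] [Algebra F E]
    (hF : Fintype.card F = 2 ^ m) (hE : Fintype.card E = (2 ^ m) ^ (2 * 2 ^ s)) :
    ¬ ∃ α : E, IsPrimitiveElem α ∧ IskNormal (2 ^ m) (2 * 2 ^ s) (2 ^ s) (F := F) α := by
  rintro ⟨α, hprim, hnorm⟩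
  unfold IskNormal at hnorm
  set q : ℕ := 2 ^ m with hqdef
  set k : ℕ := 2 ^ s with hkdef
  set n : ℕ := 2 * k with hndef
  have hk1 : 1 ≤ k := Nat.one_le_two_pow
  have hq2 : 2 ≤ q := by
    calc 2 = 2 ^ 1 := (pow_one 2).symm
    _ ≤ 2 ^ m := Nat.pow_le_pow_right (by norm_num) hm
  have hn1 : 0 < n := by omega
  have hqk2 : 2 ≤ q ^ k :=
    le_trans hq2 (Nat.le_self_pow (by omega) q |>.trans (Nat.pow_le_pow_right (by omega) hk1))
  -- characteristic of E is 2
  haveI hcharE : CharP E 2 := by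
    have hcast : ((Fintype.card E : ℕ) : E) = 0 := FiniteField.cast_card_eq_zero E
    have hdvd0 : ringChar E ∣ Fintype.card E := ringChar.dvd hcast
    have hcard2 : Fintype.card E = 2 ^ (m * n) := by
      rw [hE]; exact (pow_mul 2 m n).symm
    have hdvd : ringChar E ∣ 2 ^ (m * n) := hcard2 ▸ hdvd0
    have hp : (ringChar E).Prime := CharP.char_is_prime E (ringChar E)
    have h2 : ringChar E = 2 :=
      (Nat.prime_dvd_prime_iff_eq hp Nat.prime_two).mp (hp.dvd_of_dvd_pow hdvd)
    exact h2 ▸ ringChar.charP E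
  -- α ≠ 0
  have hα0 : α ≠ 0 := by
    rintro rfl
    have hsub : (Set.range fun i : Fin n => (0 : E) ^ q ^ (i : ℕ)) ⊆ {0} := by
      rintro _ ⟨i, rfl⟩
      simp [zero_pow (pow_ne_zero _ (by omega : q ≠ 0))]
    have hbot : Submodule.span F (Set.range fun i : Fin n => (0 : E) ^ q ^ (i : ℕ)) = ⊥ := by
      refine le_bot_iff.mp ?_
      calc Submodule.span F (Set.range fun i : Fin n => (0 : E) ^ q ^ (i : ℕ))
          ≤ Submodule.span F {0} := Submodule.span_mono hsub
        _ = ⊥ := Submodule.span_zero_singleton F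
    rw [hbot] at hnorm
    simp only [finrank_bot] at hnorm
    omega
  -- finite dimensionality
  haveI : Module.Finite F E := Module.finite_iff_finite.mpr inferInstance
  -- the Frobenius x ↦ x^q as an F-linear endomorphism of E
  have hfix : ∀ c : F, c ^ q = c := fun c => hF ▸ FiniteField.pow_card c
  set σ : E →ₗ[F] E :=
    { toFun := fun x => x ^ q
      map_add' := fun x y => by
        show (x + y) ^ (2 ^ m) = x ^ (2 ^ m) + y ^ (2 ^ m)
        exact add_pow_char_pow ..
      map_smul' := fun c x => by
        simp only [RingHom.id_apply]
        rw [_root_.smul_pow, hfix c] } with hσdef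
  have hσ : ∀ x : E, σ x = x ^ q := fun x => rfl
  set V := Submodule.span F (Set.range fun i : Fin n => α ^ q ^ (i : ℕ)) with hVdef
  have hVdim : Module.finrank F V = k := by rw [hnorm]; omega
  have hgen : ∀ i : Fin n, α ^ q ^ (i : ℕ) ∈ V :=
    fun i => Submodule.subset_span ⟨i, rfl⟩
  have hαV : α ∈ V := by
    have := hgen ⟨0, hn1⟩
    simpa using this
  -- x^(q^n) = x for all x
  have hxn : ∀ x : E, x ^ q ^ n = x := by
    intro x
    have : q ^ n = Fintype.card E := by rw [hE, hqdef, hndef, hkdef]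
    rw [this]
    exact FiniteField.pow_card x
  -- σ maps V to V
  have hstab : ∀ x ∈ V, σ x ∈ V := by
    intro x hx
    induction hx using Submodule.span_induction with
    | mem y hy =>
        obtain ⟨i, rfl⟩ := hy
        rw [hσ, ← pow_mul, ← pow_succ]
        rcases lt_or_ge ((i : ℕ) + 1) n with h | h
        · exact hgen ⟨(i : ℕ) + 1, h⟩
        · have hi : (i : ℕ) + 1 = n := by have := i.2; omega
          rw [hi, hxn α]
          exact hαV
    | zero => simp
    | add y z _ _ hy hz => rw [map_add]; exact V.add_mem hy hz
    | smul c y _ hy => rw [map_smul]; exact V.smul_mem c hy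
  set σ' : Module.End F V := σ.restrict hstab with hσ'def
  have hcoe : ∀ (j : ℕ) (x : V), ((σ' ^ j) x : E) = (x : E) ^ q ^ j := by
    intro j
    induction j with
    | zero => intro x; simp
    | succ j ih =>
        intro x
        have hres : ∀ y : V, ((σ' y : V) : E) = (y : E) ^ q := fun y => rfl
        rw [pow_succ', Module.End.mul_apply, hres, ih, ← pow_mul, ← pow_succ]
  -- char-two facts about End F V
  have h2 : ∀ a : Module.End F V, a + a = 0 := by
    intro a
    ext x
    simp only [LinearMap.add_apply, LinearMap.zero_apply, Submodule.coe_add,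
      ZeroMemClass.coe_zero]
    exact CharTwo.add_self_eq_zero _
  have hsq : ∀ a : Module.End F V, (a + 1) ^ 2 = a ^ 2 + 1 := by
    intro a
    have h := h2 a
    have key : (a + 1) ^ 2 = a ^ 2 + (a + a) + 1 := by noncomm_ring
    rw [key, h, add_zero]
  have hpow2 : ∀ (t : ℕ) (a : Module.End F V), (a + 1) ^ 2 ^ t = a ^ 2 ^ t + 1 := by
    intro t
    induction t with
    | zero => intro a; simp
    | succ t ih =>
        intro a
        rw [pow_succ, pow_mul, ih a, hsq, ← pow_mul, ← pow_succ]
  -- σ' + 1 is nilpotent : (σ'+1)^n = σ'^n + 1 = 1 + 1 = 0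
  have hσ'n : σ' ^ n = 1 := by
    ext x
    show ((σ' ^ n) x : E) = ((1 : Module.End F V) x : E)
    rw [hcoe n x, hxn]
    rfl
  have hn2 : n = 2 ^ (s + 1) := by rw [hndef, hkdef, pow_succ]; ring
  have hτn : (σ' + 1) ^ n = 0 := by
    rw [hn2, hpow2 (s + 1) σ', ← hn2, hσ'n]
    exact h2 1
  -- nilpotency index bounded by finrank V = k
  have hτk : (σ' + 1) ^ k = 0 := by
    have hc := IsNilpotent.charpoly_eq_X_pow_finrank (⟨n, hτn⟩ : IsNilpotent (σ' + 1))
    have h := LinearMap.aeval_self_charpoly (σ' + 1)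
    rw [hc, map_pow, aeval_X, hVdim] at h
    exact h
  -- hence α^(q^k) = α
  have hαqk : α ^ q ^ k = α := by
    have h0 : ((σ' + 1) ^ k) ⟨α, hαV⟩ = 0 := by rw [hτk]; rfl
    rw [hkdef, hpow2 s σ'] at h0
    simp only [LinearMap.add_apply, Module.End.one_apply] at h0
    have h'' : ((σ' ^ 2 ^ s) ⟨α, hαV⟩ : E) + α = 0 := by
      have := congrArg Subtype.val h0
      simpa using this
    rw [hcoe (2 ^ s) ⟨α, hαV⟩] at h''
    rw [hkdef]
    calc α ^ q ^ 2 ^ s = -α := eq_neg_of_add_eq_zero_left h''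
    _ = α := CharTwo.neg_eq α
  -- α has small multiplicative order
  have hord1 : α ^ (q ^ k - 1) = 1 := by
    have hc : α * α ^ (q ^ k - 1) = α * 1 := by
      rw [mul_one, ← pow_succ']
      rw [show q ^ k - 1 + 1 = q ^ k by omega]
      exact hαqk
    exact mul_left_cancel₀ hα0 hc
  have hdvd := orderOf_dvd_of_pow_eq_one hord1
  have hNpos : 0 < orderOf α := Nat.pos_of_dvd_of_pos hdvd (by omega)
  have hNle : orderOf α ≤ q ^ k - 1 := Nat.le_of_dvd (by omega) hdvd
  -- counting: all nonzero elements are powers of α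
  classical
  have hsub : (Finset.univ.erase (0 : E)) ⊆ (Finset.range (orderOf α)).image (α ^ ·) := by
    intro β hβ
    have hβ0 : β ≠ 0 := (Finset.mem_erase.mp hβ).1
    obtain ⟨j, rfl⟩ := hprim β hβ0
    exact Finset.mem_image.mpr
      ⟨j % orderOf α, Finset.mem_range.mpr (Nat.mod_lt _ hNpos), pow_mod_orderOf α j⟩
  have hcard : Fintype.card E - 1 ≤ orderOf α := by
    have h1 : (Finset.univ.erase (0 : E)).card = Fintype.card E - 1 := by
      rw [Finset.card_erase_of_mem (Finset.mem_univ _), Finset.card_univ]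
    have h2 := Finset.card_le_card hsub
    have h3 := Finset.card_image_le (s := Finset.range (orderOf α)) (f := (α ^ ·))
    rw [Finset.card_range] at h3
    omega
  have hlt : q ^ k < q ^ n := Nat.pow_lt_pow_right (by omega) (by omega)
  have hEcard : Fintype.card E = q ^ n := by rw [hE, hqdef, hndef, hkdef]
  omega
end
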